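/- Let δ, N ⊆ ℕ^n be standard sets with δ ⊆ N, δ finite. Write N^{(1)} = ℬ(N) and N^{(2)} = ℬ(N ∪ N^{(1)}). Let B be a commutative ring and (a_{α,β})_{α ∈ N ∪ N^{(1)}, β ∈ δ} satisfy: (1) a_{α,β} = δ_{αβ} for α ∈ N; (2) a_{α+e_i,β} = Σ_{γ∈δ} a_{α,γ} a_{γ+e_i,β} whenever α, α+e_i ∈ N ∪ N^{(1)}; (3) Σ_γ a_{α,γ} a_{γ+e_i,β} = Σ_γ a_{α',γ} a_{γ+e_j,β} whenever α, α' ∈ N^{(1)}, α+e_i = α'+e_j ∈ N^{(2)}. Then there is a unique extension of (a_{α,β}) to all α ∈ ℕ^n satisfying a_{α+e_i,β} = Σ_{γ∈δ} a_{α,γ} a_{γ+e_i,β} for all α ∈ ℕ^n, i, β. -/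

import Mathlib

/-- A standard set in ℕ^n: its complement is closed under addition of elements of ℕ^n. -/
def StdSet {n : ℕ} (N : Set (Fin n →₀ ℕ)) : Prop :=
  ∀ α ∉ N, ∀ γ : Fin n →₀ ℕ, α + γ ∉ N

/-- The border of N: elements outside N of the form β + e_i with β ∈ N. -/
def StdBorder {n : ℕ} (N : Set (Fin n →₀ ℕ)) : Set (Fin n →₀ ℕ) :=
  {α | α ∉ N ∧ ∃ (i : Fin n), ∃ β ∈ N, β + Finsupp.single i 1 = α}

/-!
Read `a α` as the coordinates of the monomial `x^α` in the basis `(x^β)_{β ∈ δ}`, and let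
`Tᵢ = mulVar a i` be the matrix of multiplication by `xᵢ`, whose rows are the border rows
`a (γ + eᵢ)`, `γ ∈ δ`. Conditions (2) and (3) say exactly that the `Tᵢ` commute, so
`α ↦ T^α (a 0)` is well defined; it satisfies the recurrence everywhere and, by (2), agrees with
`a` on `N ∪ ℬ(N)`. Any extension satisfying the recurrence is determined by its value at `0`.
-/

open Finsupp

section CommutingPowers

variable {M ι : Type*} [Monoid M] (T : ι → M) (hT : ∀ i j, Commute (T i) (T j))

open scoped IsMulCommutative

/-- `∏ i, T i ^ α i`, computed in the commutative submonoid generated by the `T i`. -/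
noncomputable def commPowProd (α : ι →₀ ℕ) : M :=
  haveI := Submonoid.isMulCommutative_closure M (s := Set.range T)
    (by rintro _ ⟨i, rfl⟩ _ ⟨j, rfl⟩; exact hT i j)
  ↑(α.prod fun i k =>
    (⟨T i, Submonoid.subset_closure ⟨i, rfl⟩⟩ : Submonoid.closure (Set.range T)) ^ k)

theorem commPowProd_zero : commPowProd T hT 0 = 1 := by
  simp [commPowProd]

theorem commPowProd_add_single (α : ι →₀ ℕ) (i : ι) :
    commPowProd T hT (α + single i 1) = T i * commPowProd T hT α := by
  have := Submonoid.isMulCommutative_closure M (s := Set.range T)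
    (by rintro _ ⟨i, rfl⟩ _ ⟨j, rfl⟩; exact hT i j)
  rw [commPowProd, commPowProd, add_comm,
    prod_add_index' (fun _ => pow_zero _) (fun _ _ _ => pow_add _ _ _),
    Submonoid.coe_mul, prod_single_index (by exact pow_zero _), pow_one]

end CommutingPowers

theorem Finsupp.exists_eq_add_single_one {ι : Type*} {α : ι →₀ ℕ} (h : α ≠ 0) :
    ∃ α₀ i, α = α₀ + single i 1 := by
  obtain ⟨i, hi⟩ := Finsupp.ne_iff.mp h
  exact ⟨α - single i 1, i, (sub_add_single_one_cancel hi).symm⟩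

theorem Finsupp.eqOn_of_add_single_one {ι X : Type*} {S : Set (ι →₀ ℕ)} {f g : (ι →₀ ℕ) → X}
    (T : ι → X → X) (hS : ∀ α ∈ S, α ≠ 0 → ∃ α₀ ∈ S, ∃ i, α = α₀ + single i 1)
    (h0 : f 0 = g 0)
    (hf : ∀ α ∈ S, ∀ i, α + single i 1 ∈ S → f (α + single i 1) = T i (f α))
    (hg : ∀ α ∈ S, ∀ i, α + single i 1 ∈ S → g (α + single i 1) = T i (g α)) :
    Set.EqOn f g S := by
  intro α
  induction α using WellFoundedLT.induction with
  | _ α ih =>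
    intro hα
    rcases eq_or_ne α 0 with rfl | hne
    · exact h0
    obtain ⟨α₀, hα₀, i, rfl⟩ := hS α hα hne
    have hlt : α₀ < α₀ + single i 1 := lt_add_of_pos_right _ (by simp [pos_iff_ne_zero])
    rw [hf α₀ hα₀ i hα, hg α₀ hα₀ i hα, ih α₀ hlt hα₀]

theorem Finsupp.eq_of_add_single_one {ι X : Type*} {f g : (ι →₀ ℕ) → X} (T : ι → X → X)
    (h0 : f 0 = g 0) (hf : ∀ α i, f (α + single i 1) = T i (f α))
    (hg : ∀ α i, g (α + single i 1) = T i (g α)) : f = g := by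
  refine funext fun α => eqOn_of_add_single_one (S := Set.univ) T (fun α _ hα => ?_) h0
    (fun α _ i _ => hf α i) (fun α _ i _ => hg α i) (Set.mem_univ α)
  obtain ⟨α₀, i, rfl⟩ := exists_eq_add_single_one hα
  exact ⟨α₀, trivial, i, rfl⟩

section MulVar

variable {R σ : Type*} [Semiring R] {δ : Finset (σ →₀ ℕ)} (a : (σ →₀ ℕ) → δ → R)

noncomputable def mulVar (i : σ) : Function.End (δ → R) :=
  fun v β => ∑ γ : δ, v γ * a ((γ : σ →₀ ℕ) + single i 1) β

theorem mulVar_mulVar_apply (i j : σ) (v : δ → R) (β : δ) :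
    mulVar a i (mulVar a j v) β =
      ∑ γ : δ, v γ *
        ∑ γ' : δ, a ((γ : σ →₀ ℕ) + single j 1) γ' * a ((γ' : σ →₀ ℕ) + single i 1) β := by
  simp only [mulVar, Finset.sum_mul, Finset.mul_sum, mul_assoc]
  exact Finset.sum_comm

theorem mulVar_commute
    (h : ∀ (γ : δ) (i j : σ) (β : δ),
      ∑ γ' : δ, a ((γ : σ →₀ ℕ) + single i 1) γ' * a ((γ' : σ →₀ ℕ) + single j 1) β =
        ∑ γ' : δ, a ((γ : σ →₀ ℕ) + single j 1) γ' * a ((γ' : σ →₀ ℕ) + single i 1) β)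
    (i j : σ) : Commute (mulVar a i) (mulVar a j) := by
  funext v β
  change mulVar a i (mulVar a j v) β = mulVar a j (mulVar a i v) β
  simp only [mulVar_mulVar_apply, h _ j i]

end MulVar

section StdSet

variable {n : ℕ} {N : Set (Fin n →₀ ℕ)}

theorem StdSet.mem_of_add_mem (hN : StdSet N) {α γ : Fin n →₀ ℕ} (h : α + γ ∈ N) : α ∈ N :=
  not_not.mp fun hα => hN α hα γ h

theorem StdSet.zero_mem (hN : StdSet N) {α : Fin n →₀ ℕ} (hα : α ∈ N) : 0 ∈ N :=
  hN.mem_of_add_mem (γ := α) (by rwa [zero_add])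

theorem add_single_mem_union_stdBorder {α : Fin n →₀ ℕ} (hα : α ∈ N) (i : Fin n) :
    α + single i 1 ∈ N ∪ StdBorder N :=
  or_iff_not_imp_left.mpr fun h => ⟨h, i, α, hα, rfl⟩

theorem StdSet.exists_add_single_of_mem_union_stdBorder (hN : StdSet N) {α : Fin n →₀ ℕ}
    (hα : α ∈ N ∪ StdBorder N) (h0 : α ≠ 0) :
    ∃ α₀ ∈ N ∪ StdBorder N, ∃ i, α = α₀ + single i 1 := by
  rcases hα with hα | ⟨-, i, α₀, hα₀, rfl⟩
  · obtain ⟨α₀, i, rfl⟩ := exists_eq_add_single_one h0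
    exact ⟨α₀, Or.inl (hN.mem_of_add_mem hα), i, rfl⟩
  · exact ⟨α₀, Or.inl hα₀, i, rfl⟩

end StdSet

/-- If `γ + eᵢ + eⱼ` lies in `N ∪ ℬ(N)` this is (2) applied twice, otherwise it is (3). -/
theorem sum_border_mul_border_comm {R : Type*} [Semiring R] {n : ℕ} {δ : Finset (Fin n →₀ ℕ)}
    {N : Set (Fin n →₀ ℕ)} {a : (Fin n →₀ ℕ) → δ → R}
    (h2 : ∀ (α : Fin n →₀ ℕ) (i : Fin n), α ∈ N ∪ StdBorder N →
      α + single i 1 ∈ N ∪ StdBorder N →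
      ∀ β : δ, a (α + single i 1) β = ∑ γ : δ, a α γ * a ((γ : Fin n →₀ ℕ) + single i 1) β)
    (h3 : ∀ (α α' : Fin n →₀ ℕ) (i j : Fin n), α ∈ StdBorder N → α' ∈ StdBorder N →
      α + single i 1 = α' + single j 1 →
      α + single i 1 ∈ StdBorder (N ∪ StdBorder N) →
      ∀ β : δ, ∑ γ : δ, a α γ * a ((γ : Fin n →₀ ℕ) + single i 1) β =
        ∑ γ : δ, a α' γ * a ((γ : Fin n →₀ ℕ) + single j 1) β)
    {γ : Fin n →₀ ℕ} (hγ : γ ∈ N) (i j : Fin n) (β : δ) :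
    ∑ γ' : δ, a (γ + single i 1) γ' * a ((γ' : Fin n →₀ ℕ) + single j 1) β =
      ∑ γ' : δ, a (γ + single j 1) γ' * a ((γ' : Fin n →₀ ℕ) + single i 1) β := by
  have hcomm : γ + single j 1 + single i 1 = γ + single i 1 + single j 1 := add_right_comm _ _ _
  have hi := add_single_mem_union_stdBorder hγ i
  have hj := add_single_mem_union_stdBorder hγ j
  by_cases hij : γ + single i 1 + single j 1 ∈ N ∪ StdBorder N
  · rw [← h2 _ j hi hij, ← h2 _ i hj (hcomm ▸ hij), hcomm]
  · have hbi : γ + single i 1 ∈ StdBorder N :=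
      hi.resolve_left fun h => hij (add_single_mem_union_stdBorder h j)
    have hbj : γ + single j 1 ∈ StdBorder N :=
      hj.resolve_left fun h => hij (hcomm ▸ add_single_mem_union_stdBorder h i)
    exact h3 _ _ j i hbi hbj hcomm.symm ⟨hij, j, _, Or.inr hbi, rfl⟩ β

theorem stmt13_general {B : Type*} [CommRing B] {n : ℕ}
    (δ : Finset (Fin n →₀ ℕ)) (N : Set (Fin n →₀ ℕ))
    (hNstd : StdSet N) (hδN : ↑δ ⊆ N)
    (a : (Fin n →₀ ℕ) → ↥δ → B)
    (h2 : ∀ (α : Fin n →₀ ℕ) (i : Fin n), α ∈ N ∪ StdBorder N →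
      α + Finsupp.single i 1 ∈ N ∪ StdBorder N →
      ∀ β : ↥δ, a (α + Finsupp.single i 1) β =
        ∑ γ : ↥δ, a α γ * a ((γ : Fin n →₀ ℕ) + Finsupp.single i 1) β)
    (h3 : ∀ (α α' : Fin n →₀ ℕ) (i j : Fin n), α ∈ StdBorder N → α' ∈ StdBorder N →
      α + Finsupp.single i 1 = α' + Finsupp.single j 1 →
      α + Finsupp.single i 1 ∈ StdBorder (N ∪ StdBorder N) →
      ∀ β : ↥δ, ∑ γ : ↥δ, a α γ * a ((γ : Fin n →₀ ℕ) + Finsupp.single i 1) β =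
        ∑ γ : ↥δ, a α' γ * a ((γ : Fin n →₀ ℕ) + Finsupp.single j 1) β) :
    ∃! a' : (Fin n →₀ ℕ) → ↥δ → B,
      (∀ α ∈ N ∪ StdBorder N, a' α = a α) ∧
      ∀ (α : Fin n →₀ ℕ) (i : Fin n) (β : ↥δ),
        a' (α + Finsupp.single i 1) β =
          ∑ γ : ↥δ, a' α γ * a' ((γ : Fin n →₀ ℕ) + Finsupp.single i 1) β := by
  have hT : ∀ i j, Commute (mulVar a i) (mulVar a j) :=
    mulVar_commute a fun γ => sum_border_mul_border_comm h2 h3 (hδN γ.2)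
  set a' := fun α => commPowProd (mulVar a) hT α • a 0 with ha'
  have a'_add_single : ∀ α i, a' (α + single i 1) = mulVar a i (a' α) := fun α i => by
    simp only [ha', commPowProd_add_single, mul_smul]; rfl
  have a'_eqOn : Set.EqOn a' a (N ∪ StdBorder N) :=
    eqOn_of_add_single_one (mulVar a)
      (fun _ => hNstd.exists_add_single_of_mem_union_stdBorder)
      (by simp only [ha', commPowProd_zero, one_smul])
      (fun α _ i _ => a'_add_single α i) (fun α hα i hαi => funext (h2 α i hα hαi))
  refine ⟨a', ⟨fun α hα => a'_eqOn hα, fun α i β => ?_⟩, fun b ⟨hb, hb_rec⟩ => ?_⟩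
  · rw [a'_add_single]
    refine Finset.sum_congr rfl fun γ _ => ?_
    rw [a'_eqOn (add_single_mem_union_stdBorder (hδN γ.2) i)]
  have hb0 : b 0 = a' 0 := by
    rcases isEmpty_or_nonempty δ with _ | ⟨⟨γ, hγ⟩⟩
    · exact Subsingleton.elim _ _
    · have h0 : 0 ∈ N ∪ StdBorder N := Or.inl (hNstd.zero_mem (hδN hγ))
      rw [hb 0 h0, a'_eqOn h0]
  refine eq_of_add_single_one (mulVar a) hb0 (fun α i => funext fun β => ?_) a'_add_single
  rw [hb_rec]
  refine Finset.sum_congr rfl fun γ _ => ?_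
  rw [hb _ (add_single_mem_union_stdBorder (hδN γ.2) i)]

theorem stmt13 {B : Type*} [CommRing B] {n : ℕ}
    (δ : Finset (Fin n →₀ ℕ)) (N : Set (Fin n →₀ ℕ))
    (hδstd : ∀ α ∉ δ, ∀ γ : Fin n →₀ ℕ, α + γ ∉ δ)
    (hNstd : StdSet N) (hδN : ↑δ ⊆ N)
    (a : (Fin n →₀ ℕ) → ↥δ → B)
    (h1 : ∀ α ∈ N, ∀ β : ↥δ, a α β = if α = (β : Fin n →₀ ℕ) then 1 else 0)
    (h2 : ∀ (α : Fin n →₀ ℕ) (i : Fin n), α ∈ N ∪ StdBorder N →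
      α + Finsupp.single i 1 ∈ N ∪ StdBorder N →
      ∀ β : ↥δ, a (α + Finsupp.single i 1) β =
        ∑ γ : ↥δ, a α γ * a ((γ : Fin n →₀ ℕ) + Finsupp.single i 1) β)
    (h3 : ∀ (α α' : Fin n →₀ ℕ) (i j : Fin n), α ∈ StdBorder N → α' ∈ StdBorder N →
      α + Finsupp.single i 1 = α' + Finsupp.single j 1 →
      α + Finsupp.single i 1 ∈ StdBorder (N ∪ StdBorder N) →
      ∀ β : ↥δ, ∑ γ : ↥δ, a α γ * a ((γ : Fin n →₀ ℕ) + Finsupp.single i 1) β =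
        ∑ γ : ↥δ, a α' γ * a ((γ : Fin n →₀ ℕ) + Finsupp.single j 1) β) :
    ∃! a' : (Fin n →₀ ℕ) → ↥δ → B,
      (∀ α ∈ N ∪ StdBorder N, a' α = a α) ∧
      ∀ (α : Fin n →₀ ℕ) (i : Fin n) (β : ↥δ),
        a' (α + Finsupp.single i 1) β =
          ∑ γ : ↥δ, a' α γ * a' ((γ : Fin n →₀ ℕ) + Finsupp.single i 1) β :=
  stmt13_general δ N hNstd hδN a h2 h3
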